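/- arXiv:math/0305033 — 3 statements merged into one kernel-verified Lean document; each statement's English description precedes it below -/
import Mathlib

section
/- The set A_{[s,n-1],[r,n-1]}(L) contains at most one element. That is, given integers n≥1, r,s∈[0,n] with r+s=n, integers m_0,…,m_{n-1}, l_0,…,l_{n-1}, e, d, there is at most one pair (a,b)∈ℤ^n×ℤ^n satisfying: (1) a_1≤a_2≤…≤a_n; (2) for all i∈[n-r,n-1], ∑_{j=i+1}^{n}(a_j−e) ≤ m_i with equality for all i∈[s,n-1]; (3) for all i∈[n-s,n-1], ∑_{j=1}^{n-i}(a_j−e) ≥ −l_i with equality for all i∈[r,n-1]; (4) a_i−e = −b_{n-i+1}+d for all i∈[1,n]. -/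
/-- Membership in `A_{[s,n-1],[r,n-1]}(L)`: `a` is nondecreasing on `[1,n]`;
the tail sums `∑_{j=i+1}^n (a_j - e)` are `≤ m_i` on `[n-r, n-1]` with equality on `[s,n-1]`;
the head sums `∑_{j=1}^{n-i} (a_j - e)` are `≥ -l_i` on `[n-s, n-1]` with equality on `[r,n-1]`;
and `a_i - e = -b_{n-i+1} + d` for `i ∈ [1,n]`. -/
def memA (n r s : ℕ) (m l : ℕ → ℤ) (e d : ℤ) (a b : ℕ → ℤ) : Prop :=
  (∀ i, 1 ≤ i → i < n → a i ≤ a (i + 1)) ∧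
  (∀ i, n - r ≤ i → i ≤ n - 1 → ∑ j ∈ Finset.Icc (i + 1) n, (a j - e) ≤ m i) ∧
  (∀ i, s ≤ i → i ≤ n - 1 → ∑ j ∈ Finset.Icc (i + 1) n, (a j - e) = m i) ∧
  (∀ i, n - s ≤ i → i ≤ n - 1 → -l i ≤ ∑ j ∈ Finset.Icc 1 (n - i), (a j - e)) ∧
  (∀ i, r ≤ i → i ≤ n - 1 → ∑ j ∈ Finset.Icc 1 (n - i), (a j - e) = -l i) ∧
  (∀ i, 1 ≤ i → i ≤ n → a i - e = -(b (n - i + 1)) + d)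

/-- The set `A_{[s,n-1],[r,n-1]}(L)` contains at most one element. -/
theorem stmt0 (n r s : ℕ) (hn : 1 ≤ n) (hr : r ≤ n) (hs : s ≤ n) (hrs : r + s = n)
    (m l : ℕ → ℤ) (e d : ℤ) (a b a' b' : ℕ → ℤ)
    (h : memA n r s m l e d a b) (h' : memA n r s m l e d a' b') :
    ∀ i, 1 ≤ i → i ≤ n → a i = a' i ∧ b i = b' i := by
  obtain ⟨-, -, hT, -, hH, hab⟩ := h
  obtain ⟨-, -, hT', -, hH', hab'⟩ := h'
  have splitlo : ∀ (f : ℕ → ℤ) {i : ℕ}, i ≤ n →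
      ∑ j ∈ Finset.Icc i n, f j = f i + ∑ j ∈ Finset.Icc (i + 1) n, f j := by
    intro f i hin
    rw [Finset.Icc_eq_cons_Ioc hin, Finset.sum_cons, ← Finset.Icc_add_one_left_eq_Ioc]
  have splithi : ∀ (f : ℕ → ℤ) {i : ℕ}, 1 ≤ i →
      ∑ j ∈ Finset.Icc 1 i, f j = ∑ j ∈ Finset.Icc 1 (i - 1), f j + f i := by
    intro f i hi
    obtain ⟨k, rfl⟩ : ∃ k, i = k + 1 := ⟨i - 1, by omega⟩
    rw [Finset.sum_Icc_succ_top (by omega : 1 ≤ k + 1)]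
    simp
  have key : ∀ i, 1 ≤ i → i ≤ n → a i = a' i := by
    intro i hi1 hin
    by_cases hcase : s < i
    · -- tail sums determine a i
      have t1 := hT (i - 1) (by omega) (by omega)
      have t1' := hT' (i - 1) (by omega) (by omega)
      rw [show i - 1 + 1 = i from by omega] at t1 t1'
      have s1 := splitlo (fun j => a j - e) hin
      have s1' := splitlo (fun j => a' j - e) hin
      rcases Nat.lt_or_ge i n with hlt | hge
      · have t2 := hT i (by omega) (by omega)
        have t2' := hT' i (by omega) (by omega)
        linarith [s1, s1', t1, t1', t2, t2']
      · have : Finset.Icc (i + 1) n = ∅ := Finset.Icc_eq_empty (by omega)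
        rw [this, Finset.sum_empty] at s1 s1'
        linarith [s1, s1', t1, t1']
    · -- head sums determine a i
      have hs1 : 1 ≤ s := le_trans hi1 (by omega)
      rcases Nat.lt_or_ge 1 i with hi2 | hi2
      · have h1 := hH (n - i) (by omega) (by omega)
        have h1' := hH' (n - i) (by omega) (by omega)
        have h2 := hH (n - i + 1) (by omega) (by omega)
        have h2' := hH' (n - i + 1) (by omega) (by omega)
        rw [show n - (n - i) = i from by omega] at h1 h1'
        rw [show n - (n - i + 1) = i - 1 from by omega] at h2 h2'
        have s1 := splithi (fun j => a j - e) hi1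
        have s1' := splithi (fun j => a' j - e) hi1
        linarith [s1, s1', h1, h1', h2, h2']
      · have hi : i = 1 := by omega
        subst hi
        have h1 := hH (n - 1) (by omega) le_rfl
        have h1' := hH' (n - 1) (by omega) le_rfl
        rw [show n - (n - 1) = 1 from by omega] at h1 h1'
        rw [Finset.Icc_self, Finset.sum_singleton] at h1 h1'
        linarith [h1, h1']
  intro i hi1 hin
  refine ⟨key i hi1 hin, ?_⟩
  have hj1 : 1 ≤ n - i + 1 := by omega
  have hjn : n - i + 1 ≤ n := by omega
  have e1 := hab (n - i + 1) hj1 hjn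
  have e1' := hab' (n - i + 1) hj1 hjn
  rw [show n - (n - i + 1) + 1 = i from by omega] at e1 e1'
  have := key (n - i + 1) hj1 hjn
  linarith [e1, e1', this]
end

section
/- Finiteness of A_{IJ}(L) when I and J are nonempty: let n≥1, I,J⊆[0,n−1] nonempty with min(I)+min(J)≥n, and (m_i),(l_i),e,d integers. Then the set A_{IJ}(m,l,e,d) is finite. -/
/-!
Write `c_j = a_j - e`, a nondecreasing vector. With `i₁ = min I` and `j₁ = min J`, the two
equalities at `i₁` and `j₁` fix the sum of `c` over the suffix `[i₁, n)` and over the prefix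
`[0, n - j₁)`, and `min I + min J ≥ n` puts the prefix before the suffix. Monotonicity makes
the first entry of the suffix at most its average and the last entry of the prefix at least
its average; so every entry of the suffix is bounded below, every entry of the prefix above,
and the fixed sums bound the remaining side. Entries between the two blocks are squeezed by
monotonicity. Hence `a` ranges over a finite box, and `b` is determined by `a`.
-/

open Finset

variable {ι R : Type*} [CommRing R] [LinearOrder R] [IsStrictOrderedRing R]

namespace Finset

theorem le_abs_sum_of_forall_le {s : Finset ι} (hs : s.Nonempty) {f : ι → R} {x : R}
    (hx : ∀ j ∈ s, x ≤ f j) : x ≤ |∑ j ∈ s, f j| := by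
  rcases le_or_gt x 0 with hx0 | hx0
  · exact hx0.trans (abs_nonneg _)
  have hcard : (1 : R) ≤ #s := by exact_mod_cast hs.card_pos
  calc x ≤ #s * x := le_mul_of_one_le_left hx0.le hcard
    _ = #s • x := (nsmul_eq_mul _ _).symm
    _ ≤ ∑ j ∈ s, f j := card_nsmul_le_sum s f x hx
    _ ≤ |∑ j ∈ s, f j| := le_abs_self _

theorem neg_abs_sum_le_of_forall_le {s : Finset ι} (hs : s.Nonempty) {f : ι → R} {x : R}
    (hx : ∀ j ∈ s, f j ≤ x) : -|∑ j ∈ s, f j| ≤ x := by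
  have := le_abs_sum_of_forall_le hs (f := fun j => -f j) (x := -x) fun j hj => neg_le_neg (hx j hj)
  rw [sum_neg_distrib, abs_neg] at this
  linarith

theorem le_sum_sub_mul_of_forall_le {s : Finset ι} {f : ι → R} {y : R} {k : ι} (hk : k ∈ s)
    (hy : ∀ j ∈ s, y ≤ f j) : f k ≤ ∑ j ∈ s, f j - (#s - 1) * y := by
  have := single_le_sum (f := fun j => f j - y) (fun j hj => sub_nonneg.mpr (hy j hj)) hk
  rw [sum_sub_distrib, sum_const, nsmul_eq_mul] at this
  linarith

theorem sum_sub_mul_le_of_forall_le {s : Finset ι} {f : ι → R} {y : R} {k : ι} (hk : k ∈ s)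
    (hy : ∀ j ∈ s, f j ≤ y) : ∑ j ∈ s, f j - (#s - 1) * y ≤ f k := by
  have := le_sum_sub_mul_of_forall_le (f := fun j => -f j) (y := -y) hk
    fun j hj => neg_le_neg (hy j hj)
  rw [sum_neg_distrib] at this
  linarith

end Finset

theorem Monotone.mem_Icc_of_suffix_sum_of_prefix_sum {n : ℕ} {f : Fin n → R} (hf : Monotone f)
    {i t : ℕ} (ht : 0 < t) (hti : t ≤ i) (hi : i < n) {M L : R}
    (hM : ∑ j ∈ univ.filter (fun j : Fin n => i ≤ j.val), f j = M)
    (hL : ∑ j ∈ univ.filter (fun j : Fin n => j.val < t), f j = L) (k : Fin n) :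
    f k ∈ Set.Icc (-|L| - n * |M|) (|M| + n * |L|) := by
  set S := univ.filter (fun j : Fin n => i ≤ j.val)
  set T := univ.filter (fun j : Fin n => j.val < t)
  let first : Fin n := ⟨i, hi⟩
  let last : Fin n := ⟨t - 1, by omega⟩
  have hfirst : first ∈ S := by simp [S, first]
  have hlast : last ∈ T := by simp [T, last]; omega
  have hfirst_le : ∀ j ∈ S, f first ≤ f j := fun j hj =>
    hf (Fin.le_def.mpr (by simp only [S, mem_filter] at hj; exact hj.2))
  have hle_last : ∀ j ∈ T, f j ≤ f last := fun j hj =>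
    hf (Fin.le_def.mpr (by simp only [T, mem_filter] at hj; dsimp [last]; omega))
  have hfirst_le_M : f first ≤ |M| := hM ▸ le_abs_sum_of_forall_le ⟨_, hfirst⟩ hfirst_le
  have hL_le_last : -|L| ≤ f last := hL ▸ neg_abs_sum_le_of_forall_le ⟨_, hlast⟩ hle_last
  have hlast_le_first : f last ≤ f first := hf (Fin.le_def.mpr (by dsimp [first, last]; omega))
  have hcardS : (#S : R) ≤ n := by exact_mod_cast (card_filter_le _ _).trans_eq (card_fin n)
  have hcardT : (#T : R) ≤ n := by exact_mod_cast (card_filter_le _ _).trans_eq (card_fin n)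
  have hMn : 0 ≤ n * |M| := by positivity
  have hLn : 0 ≤ n * |L| := by positivity
  constructor
  · by_cases hk : k.val < t
    · have hkT : k ∈ T := by simp [T, hk]
      have h := sum_sub_mul_le_of_forall_le hkT fun j hj => (hle_last j hj).trans
        (hlast_le_first.trans hfirst_le_M)
      have : (#T - 1 : R) * |M| ≤ n * |M| := by gcongr; linarith
      rw [hL] at h
      linarith [neg_abs_le L]
    · have : f last ≤ f k := hf (Fin.le_def.mpr (by dsimp [last]; omega))
      linarith
  · by_cases hk : i ≤ k.val
    · have hkS : k ∈ S := by simp [S, hk]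
      have h := le_sum_sub_mul_of_forall_le hkS fun j hj => hL_le_last.trans
        (hlast_le_first.trans (hfirst_le j hj))
      have : (#S - 1 : R) * |L| ≤ n * |L| := by gcongr; linarith
      rw [hM] at h
      linarith [le_abs_self M]
    · have : f k ≤ f first := hf (Fin.le_def.mpr (by dsimp [first]; omega))
      linarith

/-- Finiteness of `A_{IJ}(L)` when `I` and `J` are both nonempty. Here `a, b ∈ ℤ^n` are
encoded with 0-based indices: `p.1 ⟨j-1⟩` is `a_j` and `p.2 ⟨j-1⟩` is `b_j`, so that
`b_{n-i+1}` is `p.2 i.rev` for the index `i`. -/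
theorem stmt5 (n : ℕ) (hn : 1 ≤ n) (I J : Finset ℕ)
    (hI : I.Nonempty) (hJ : J.Nonempty)
    (hIsub : ∀ i ∈ I, i ≤ n - 1) (hJsub : ∀ j ∈ J, j ≤ n - 1)
    (hmin : n ≤ I.min' hI + J.min' hJ)
    (m l : ℕ → ℤ) (e d : ℤ) :
    {p : (Fin n → ℤ) × (Fin n → ℤ) |
      (∀ i j : Fin n, i ≤ j → p.1 i ≤ p.1 j) ∧
      (∀ i, n - J.min' hJ ≤ i → i ≤ n - 1 →
        ∑ j ∈ Finset.univ.filter (fun j : Fin n => i ≤ j.val), (p.1 j - e) ≤ m i) ∧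
      (∀ i ∈ I, ∑ j ∈ Finset.univ.filter (fun j : Fin n => i ≤ j.val), (p.1 j - e) = m i) ∧
      (∀ i, n - I.min' hI ≤ i → i ≤ n - 1 →
        -l i ≤ ∑ j ∈ Finset.univ.filter (fun j : Fin n => j.val < n - i), (p.1 j - e)) ∧
      (∀ i ∈ J, ∑ j ∈ Finset.univ.filter (fun j : Fin n => j.val < n - i), (p.1 j - e) = -l i) ∧
      (∀ i : Fin n, p.1 i - e = -(p.2 i.rev) + d)}.Finite := by
  set i₁ := I.min' hI
  set j₁ := J.min' hJ
  have hi₁ := hIsub i₁ (I.min'_mem hI)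
  have hj₁ := hJsub j₁ (J.min'_mem hJ)
  set M := m i₁
  set L := -l j₁
  refine ((Set.Finite.pi (ι := Fin n) fun _ =>
    Set.finite_Icc (e + (-|L| - n * |M|)) (e + (|M| + n * |L|))).image
      fun a => (a, fun k => d + e - a k.rev)).subset ?_
  rintro ⟨a, b⟩ ⟨hmono, -, hIeq, -, hJeq, hab⟩
  refine ⟨a, fun k _ => ?_, Prod.ext rfl (funext fun k => ?_)⟩
  · have hk := Monotone.mem_Icc_of_suffix_sum_of_prefix_sum (f := fun j => a j - e)
      (fun x y h => sub_le_sub_right (hmono x y h) e) (by omega) (by omega) (by omega)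
      (hIeq i₁ (I.min'_mem hI)) (hJeq j₁ (J.min'_mem hJ)) k
    exact ⟨by linarith [hk.1], by linarith [hk.2]⟩
  · have := hab k.rev
    rw [Fin.rev_rev] at this
    dsimp only
    linarith
end

section
/- The cone σ(α,ℓ) is generated over ℚ_{≥0} by the n vectors −(e_{α(1)}+…+e_{α(k)}) for k=1,…,ℓ and e_{α(k)}+e_{α(k+1)}+…+e_{α(n)} for k=ℓ+1,…,n, where e_1,…,e_n is the standard basis of ℚ^n. That is, every x∈σ(α,ℓ) is a nonnegative rational combination of these n vectors, and conversely each such combination lies in σ(α,ℓ). -/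
/-- The cone `σ(α,ℓ) = {x ∈ ℚ^n : x_{α(1)} ≤ … ≤ x_{α(ℓ)} ≤ 0 ≤ x_{α(ℓ+1)} ≤ … ≤ x_{α(n)}}`
(0-based: positions `i` with `i.val < ℓ` are the nonpositive part). -/
def sigmaCone (n ℓ : ℕ) (α : Equiv.Perm (Fin n)) : Set (Fin n → ℚ) :=
  {x | (∀ i j : Fin n, i ≤ j → j.val < ℓ → x (α i) ≤ x (α j)) ∧
       (∀ i : Fin n, i.val < ℓ → x (α i) ≤ 0) ∧
       (∀ i : Fin n, ℓ ≤ i.val → 0 ≤ x (α i)) ∧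
       (∀ i j : Fin n, i ≤ j → ℓ ≤ i.val → x (α i) ≤ x (α j))}

/-- The `k`-th generator of the cone `σ(α,ℓ)` (0-based `k`): for `k.val < ℓ` it is
`-(e_{α(1)} + … + e_{α(k+1)})` and for `k.val ≥ ℓ` it is `e_{α(k+1)} + … + e_{α(n)}`. -/
def gen (n ℓ : ℕ) (α : Equiv.Perm (Fin n)) (k : Fin n) : Fin n → ℚ :=
  fun j => if k.val < ℓ then (if α.symm j ≤ k then -1 else 0)
           else (if k ≤ α.symm j then 1 else 0)

open Finset

/-- Evaluation of a nonnegative combination of generators at `α i`. -/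
lemma eval_sum (n ℓ : ℕ) (hℓ : ℓ ≤ n) (α : Equiv.Perm (Fin n)) (c : Fin n → ℚ)
    (i : Fin n) :
    (∑ k : Fin n, c k • gen n ℓ α k) (α i) =
      if i.val < ℓ then
        -(∑ m ∈ Finset.Ico i.val ℓ, if h : m < n then c ⟨m, h⟩ else 0)
      else ∑ m ∈ Finset.Icc ℓ i.val, if h : m < n then c ⟨m, h⟩ else 0 := by
  set C : ℕ → ℚ := fun m => if h : m < n then c ⟨m, h⟩ else 0 with hC
  set f : ℕ → ℚ := fun m =>
    C m * (if m < ℓ then (if i.val ≤ m then -1 else 0)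
           else (if m ≤ i.val then 1 else 0)) with hf
  have hstep : (∑ k : Fin n, c k • gen n ℓ α k) (α i) = ∑ m ∈ Finset.range n, f m := by
    rw [← Fin.sum_univ_eq_sum_range f n]
    rw [Finset.sum_apply]
    refine Finset.sum_congr rfl fun k _ => ?_
    have hCk : C k.val = c k := by simp [hC]
    simp only [hf, hCk, Pi.smul_apply, smul_eq_mul, gen, Equiv.symm_apply_apply,
      Fin.le_def]
  rw [hstep]
  by_cases hi : i.val < ℓ
  · rw [if_pos hi]
    have h1 : ∀ m ∈ Finset.range n, f m = if m ∈ Finset.Ico i.val ℓ then -C m else 0 := by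
      intro m _
      simp only [hf, Finset.mem_Ico]
      by_cases hm : m < ℓ
      · by_cases him : i.val ≤ m
        · rw [if_pos hm, if_pos him, if_pos ⟨him, hm⟩]; ring
        · rw [if_pos hm, if_neg him, if_neg (by omega)]; ring
      · rw [if_neg hm, if_neg (by omega), if_neg (by omega)]; ring
    rw [Finset.sum_congr rfl h1, Finset.sum_ite_mem]
    have : Finset.range n ∩ Finset.Ico i.val ℓ = Finset.Ico i.val ℓ := by
      apply Finset.inter_eq_right.mpr
      intro m hm
      simp only [Finset.mem_Ico] at hm
      simp only [Finset.mem_range]; omega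
    rw [this, ← Finset.sum_neg_distrib]
  · rw [if_neg hi]
    push_neg at hi
    have h1 : ∀ m ∈ Finset.range n, f m = if m ∈ Finset.Icc ℓ i.val then C m else 0 := by
      intro m _
      simp only [hf, Finset.mem_Icc]
      by_cases hm : m < ℓ
      · rw [if_pos hm, if_neg (by omega), if_neg (by omega)]; ring
      · by_cases him : m ≤ i.val
        · rw [if_neg hm, if_pos him, if_pos ⟨by omega, him⟩]; ring
        · rw [if_neg hm, if_neg him, if_neg (by omega)]; ring
    rw [Finset.sum_congr rfl h1, Finset.sum_ite_mem]
    congr 1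
    apply Finset.inter_eq_right.mpr
    intro m hm
    simp only [Finset.mem_Icc] at hm
    simp only [Finset.mem_range]
    have := i.isLt; omega

/-- The cone `σ(α,ℓ)` is generated over `ℚ≥0` by the `n` vectors
`-(e_{α(1)} + … + e_{α(k)})` for `k = 1, …, ℓ` and `e_{α(k)} + … + e_{α(n)}`
for `k = ℓ+1, …, n`. -/
theorem stmt8 (n : ℕ) (hn : 1 ≤ n) (ℓ : ℕ) (hℓ : ℓ ≤ n) (α : Equiv.Perm (Fin n))
    (x : Fin n → ℚ) :
    x ∈ sigmaCone n ℓ α ↔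
      ∃ c : Fin n → ℚ, (∀ k, 0 ≤ c k) ∧ x = ∑ k : Fin n, c k • gen n ℓ α k := by
  constructor
  · rintro ⟨h1, h2, h3, h4⟩
    set X : ℕ → ℚ := fun m => if h : m < n then x (α ⟨m, h⟩) else 0 with hX
    set d : ℕ → ℚ := fun m =>
      if m + 1 < ℓ then X (m + 1) - X m
      else if m < ℓ then -X m
      else if m = ℓ then X m
      else X m - X (m - 1) with hd
    have tel1 : ∀ i : ℕ, i < ℓ → ∑ m ∈ Finset.Ico i ℓ, d m = -X i := by
      intro i hi
      obtain ⟨b, rfl⟩ : ∃ b, ℓ = b + 1 := ⟨ℓ - 1, by omega⟩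
      rw [Finset.sum_Ico_succ_top (by omega)]
      have hdb : d b = -X b := by
        simp only [hd]
        rw [if_neg (by omega), if_pos (by omega)]
      have hmid : ∑ m ∈ Finset.Ico i b, d m = X b - X i := by
        have : ∀ m ∈ Finset.Ico i b, d m = X (m + 1) - X m := by
          intro m hm
          simp only [Finset.mem_Ico] at hm
          simp only [hd]
          rw [if_pos (by omega)]
        rw [Finset.sum_congr rfl this,
          Finset.sum_Ico_eq_sub _ (by omega : i ≤ b),
          Finset.sum_range_sub (fun t => X t), Finset.sum_range_sub (fun t => X t)]
        ring
      rw [hmid, hdb]; ring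
    have tel2 : ∀ i : ℕ, ℓ ≤ i → (i < n → ∑ m ∈ Finset.Icc ℓ i, d m = X i) := by
      intro i hi
      induction i, hi using Nat.le_induction with
      | base =>
        intro hn'
        rw [Finset.Icc_self, Finset.sum_singleton]
        simp only [hd]
        simp
      | succ i hi ih =>
        intro hn'
        rw [Finset.sum_Icc_succ_top (by omega), ih (by omega)]
        have : d (i + 1) = X (i + 1) - X i := by
          simp only [hd]
          rw [if_neg (by omega), if_neg (by omega), if_neg (by omega)]
          simp
        rw [this]; ring
    have hdnn : ∀ m : ℕ, m < n → 0 ≤ d m := by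
      intro m hm
      simp only [hd]
      by_cases hA : m + 1 < ℓ
      · rw [if_pos hA]
        simp only [hX]
        rw [dif_pos (by omega : m + 1 < n), dif_pos hm]
        have := h1 ⟨m, hm⟩ ⟨m + 1, by omega⟩ (Fin.mk_le_mk.mpr (by omega)) hA
        linarith
      · rw [if_neg hA]
        by_cases hB : m < ℓ
        · rw [if_pos hB]
          simp only [hX]
          rw [dif_pos hm]
          have := h2 ⟨m, hm⟩ hB
          linarith
        · rw [if_neg hB]
          by_cases hCc : m = ℓ
          · rw [if_pos hCc]
            simp only [hX]
            rw [dif_pos hm]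
            exact h3 ⟨m, hm⟩ (show ℓ ≤ m by omega)
          · rw [if_neg hCc]
            simp only [hX]
            rw [dif_pos hm, dif_pos (by omega : m - 1 < n)]
            have := h4 ⟨m - 1, by omega⟩ ⟨m, hm⟩ (Fin.mk_le_mk.mpr (by omega))
              (show ℓ ≤ m - 1 by omega)
            linarith
    refine ⟨fun k => d k.val, fun k => hdnn k.val k.isLt, ?_⟩
    funext j
    have hj : j = α (α.symm j) := (α.apply_symm_apply j).symm
    rw [hj, eval_sum n ℓ hℓ α _ (α.symm j)]
    set i := α.symm j with hi
    have hCd : ∀ m : ℕ, m < n →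
        (if h : m < n then (fun k : Fin n => d k.val) ⟨m, h⟩ else 0) = d m := by
      intro m hm; rw [dif_pos hm]
    by_cases hiℓ : i.val < ℓ
    · rw [if_pos hiℓ]
      rw [Finset.sum_congr rfl (fun m hm => hCd m (by simp only [Finset.mem_Ico] at hm; omega))]
      rw [tel1 i.val hiℓ]
      simp [hX, i.isLt]
    · rw [if_neg hiℓ]
      rw [Finset.sum_congr rfl
        (fun m hm => hCd m (by simp only [Finset.mem_Icc] at hm; have := i.isLt; omega))]
      rw [tel2 i.val (by omega) i.isLt]
      simp [hX, i.isLt]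
  · rintro ⟨c, hc, rfl⟩
    have hCnn : ∀ m : ℕ, 0 ≤ (if h : m < n then c ⟨m, h⟩ else 0 : ℚ) := by
      intro m
      by_cases hm : m < n
      · rw [dif_pos hm]; exact hc _
      · rw [dif_neg hm]
    refine ⟨?_, ?_, ?_, ?_⟩
    · intro i j hij hj
      rw [eval_sum n ℓ hℓ α c i, eval_sum n ℓ hℓ α c j,
        if_pos (by have := Fin.le_def.mp hij; omega : i.val < ℓ), if_pos hj]
      apply neg_le_neg
      apply Finset.sum_le_sum_of_subset_of_nonneg
      · exact Finset.Ico_subset_Ico (Fin.le_def.mp hij) le_rfl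
      · intro m _ _; exact hCnn m
    · intro i hi
      rw [eval_sum n ℓ hℓ α c i, if_pos hi]
      exact neg_nonpos.mpr (Finset.sum_nonneg fun m _ => hCnn m)
    · intro i hi
      rw [eval_sum n ℓ hℓ α c i, if_neg (by omega)]
      exact Finset.sum_nonneg fun m _ => hCnn m
    · intro i j hij hi
      have hj : ℓ ≤ j.val := le_trans hi (Fin.le_def.mp hij)
      rw [eval_sum n ℓ hℓ α c i, eval_sum n ℓ hℓ α c j, if_neg (by omega), if_neg (by omega)]
      apply Finset.sum_le_sum_of_subset_of_nonneg
      · exact Finset.Icc_subset_Icc le_rfl (Fin.le_def.mp hij)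
      · intro m _ _; exact hCnn m
end
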